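/- Let M and N be rectangle persistence modules with rectangles (a₁,b₁)×(a₂,b₂) and (c₁,d₁)×(c₂,d₂), and let ε ≥ 0. There exists a non-trivial morphism f: M → N(ε) (where N(ε) is the ε-shift of N) if and only if max{ max_{i}(c_i−a_i), max_{i}(d_i−b_i) } ≤ ε < min_{i}(d_i−a_i). -/

import Mathlib

open Classical

noncomputable section

/-- A point of the parameter space `ℝⁿ`. -/
abbrev Pt (n : ℕ) := Fin n → ℝ

/-- Shift of a point by the diagonal vector `(ε, …, ε)`. -/
def shiftPt {n : ℕ} (u : Pt n) (ε : ℝ) : Pt n := fun i => u i + ε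

lemma shiftPt_mono {n : ℕ} {u v : Pt n} (ε : ℝ) (h : u ≤ v) :
    shiftPt u ε ≤ shiftPt v ε := fun i => by show u i + ε ≤ v i + ε; linarith [h i]

lemma le_shiftPt {n : ℕ} (u : Pt n) {ε : ℝ} (hε : 0 ≤ ε) : u ≤ shiftPt u ε :=
  fun i => le_add_of_nonneg_right hε

/-- An `n`-parameter persistence module over the field `k`. -/
structure PersMod (k : Type) [Field k] (n : ℕ) where
  obj : Pt n → Type
  [acg : ∀ u, AddCommGroup (obj u)]
  [mod : ∀ u, Module k (obj u)]
  map : ∀ {u v : Pt n}, u ≤ v → (obj u →ₗ[k] obj v)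
  map_id : ∀ u : Pt n, map (le_refl u) = LinearMap.id
  map_comp : ∀ {u v w : Pt n} (h1 : u ≤ v) (h2 : v ≤ w),
    (map h2).comp (map h1) = map (h1.trans h2)

attribute [instance] PersMod.acg PersMod.mod

variable {k : Type} [Field k] {n : ℕ}

/-- A morphism of persistence modules. -/
structure PersHom (M N : PersMod k n) where
  app : ∀ u, M.obj u →ₗ[k] N.obj u
  natural : ∀ {u v : Pt n} (h : u ≤ v),
    (app v).comp (M.map h) = (N.map h).comp (app u)

/-- A morphism is trivial when every component is the zero map. -/
def PersHom.Trivial {M N : PersMod k n} (f : PersHom M N) : Prop := ∀ u, f.app u = 0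

/-- The `ε`-shift of a persistence module. -/
def PersMod.shift (M : PersMod k n) (ε : ℝ) : PersMod k n where
  obj u := M.obj (shiftPt u ε)
  map h := M.map (shiftPt_mono ε h)
  map_id u := M.map_id _
  map_comp h1 h2 := M.map_comp _ _

/-- `(f, g)` is an `ε`-interleaving pair between `M` and `N`. -/
def IsInterleavingPair (M N : PersMod k n) (ε : ℝ) (hε : 0 ≤ ε)
    (f : PersHom M (N.shift ε)) (g : PersHom N (M.shift ε)) : Prop :=
  (∀ u : Pt n, (g.app (shiftPt u ε)).comp (f.app u) =
      M.map ((le_shiftPt u hε).trans (le_shiftPt _ hε))) ∧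
  (∀ u : Pt n, (f.app (shiftPt u ε)).comp (g.app u) =
      N.map ((le_shiftPt u hε).trans (le_shiftPt _ hε)))

/-- `M` and `N` are `ε`-interleaved. -/
def Interleaved (M N : PersMod k n) (ε : ℝ) : Prop :=
  ∃ (hε : 0 ≤ ε) (f : PersHom M (N.shift ε)) (g : PersHom N (M.shift ε)),
    IsInterleavingPair M N ε hε f g

/-- The interleaving distance, with value in the extended reals. -/
def interleavingDist (M N : PersMod k n) : EReal :=
  sInf {x : EReal | ∃ ε : ℝ, Interleaved M N ε ∧ x = (ε : EReal)}

/-- `M` is `ε`-trivial : all transition maps `M_u → M_{u+(ε,…,ε)}` vanish. -/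
def EpsTrivial (M : PersMod k n) (ε : ℝ) : Prop :=
  ∀ (u : Pt n) (h : u ≤ shiftPt u ε), M.map h = 0

/-- The zero persistence module. -/
def ZeroMod (k : Type) [Field k] (n : ℕ) : PersMod k n where
  obj _ := PUnit
  map _ := 0
  map_id _ := by apply LinearMap.ext; intro x; exact Subsingleton.elim _ _
  map_comp _ _ := by apply LinearMap.ext; intro x; exact Subsingleton.elim _ _

/-- The space at `u` of the interval module on `I` : all of `k` if `u ∈ I`, `0` otherwise. -/
def segSpace (k : Type) [Field k] {n : ℕ} (I : Set (Pt n)) (u : Pt n) : Submodule k k where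
  carrier := {x | u ∉ I → x = 0}
  add_mem' := by intro x y hx hy h; simp only [Set.mem_setOf_eq] at *; rw [hx h, hy h, add_zero]
  zero_mem' := fun _ => rfl
  smul_mem' := by intro c x hx h; simp only [Set.mem_setOf_eq] at *; rw [hx h, smul_zero]

/-- The interval persistence module on an order-convex set `I` : `k` on `I` with identity
internal transition maps, `0` elsewhere. -/
def IntervalMod (k : Type) [Field k] {n : ℕ} (I : Set (Pt n)) (hI : I.OrdConnected) :
    PersMod k n where
  obj u := segSpace k I u
  map {u v} h :=
    { toFun := fun x => ⟨if v ∈ I then (x : k) else 0, by intro hv; simp [hv]⟩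
      map_add' := by intro x y; apply Subtype.ext; by_cases hv : v ∈ I <;> simp [hv]
      map_smul' := by intro c x; apply Subtype.ext; by_cases hv : v ∈ I <;> simp [hv] }
  map_id u := by
    apply LinearMap.ext; intro x
    apply Subtype.ext
    by_cases hu : u ∈ I
    · simp [hu]
    · simp [hu, x.2 hu]
  map_comp {u v w} h1 h2 := by
    apply LinearMap.ext; intro x
    apply Subtype.ext
    by_cases hw : w ∈ I
    · by_cases hv : v ∈ I
      · simp [hw, hv]
      · by_cases hu : u ∈ I
        · exact absurd (hI.out hu hw ⟨h1, h2⟩) hv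
        · simp [hw, hv, x.2 hu]
    · simp [hw]

/-- The open box `∏ᵢ (aᵢ, bᵢ)` with extended-real endpoints. -/
def box {n : ℕ} (a b : Fin n → EReal) : Set (Pt n) :=
  {u | ∀ i, a i < (u i : EReal) ∧ (u i : EReal) < b i}

lemma box_ordConnected {n : ℕ} (a b : Fin n → EReal) : (box a b).OrdConnected := by
  constructor
  intro u hu w hw v hv i
  exact ⟨lt_of_lt_of_le (hu i).1 (by exact_mod_cast hv.1 i),
    lt_of_le_of_lt (by exact_mod_cast hv.2 i) (hw i).2⟩

/-- The rectangle persistence module with underlying open rectangle `∏ᵢ (aᵢ, bᵢ)`. -/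
def RectMod (k : Type) [Field k] {n : ℕ} (a b : Fin n → EReal) : PersMod k n :=
  IntervalMod k (box a b) (box_ordConnected a b)

/-- Subtraction of extended reals with the conventions `(±∞) − (±∞) = 0`. -/
def esub (x y : EReal) : EReal :=
  if (x = ⊤ ∧ y = ⊤) ∨ (x = ⊥ ∧ y = ⊥) then 0 else x - y

/-- Absolute value on the extended reals (`|±∞| = +∞`). -/
def eabs (x : EReal) : EReal := max x (-x)

/-- The `ℓ^∞`-distance `‖x − y‖_∞` on extended `ℝⁿ`. -/
def supDist {n : ℕ} (x y : Fin n → EReal) : EReal := ⨆ i, eabs (esub (x i) (y i))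

/-- The closed formula for the interleaving distance between the rectangle modules with
rectangles `∏ (aᵢ, bᵢ)` and `∏ (cᵢ, dᵢ)`. -/
def dIFormula {n : ℕ} (a b c d : Fin n → EReal) : EReal :=
  min (max (⨅ i, esub (b i) (a i) / 2) (⨅ i, esub (d i) (c i) / 2))
      (max (supDist c a) (supDist d b))

/-- `M` and `N` are isomorphic persistence modules. -/
def PersIso (M N : PersMod k n) : Prop :=
  ∃ f : PersHom M N, ∀ u, Function.Bijective (f.app u)

/-- `M` is a non-zero persistence module. -/
def PersMod.Nonzero (M : PersMod k n) : Prop := ∃ (u : Pt n) (x : M.obj u), x ≠ 0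

/-- Direct sum of two persistence modules. -/
def dirSum (M N : PersMod k n) : PersMod k n where
  obj u := M.obj u × N.obj u
  map h := (M.map h).prodMap (N.map h)
  map_id u := by
    apply LinearMap.ext; intro x
    show ((M.map (le_refl u)) x.1, (N.map (le_refl u)) x.2) = x
    rw [M.map_id, N.map_id]; rfl
  map_comp h1 h2 := by
    apply LinearMap.ext; intro x
    show ((M.map _) ((M.map _) x.1), (N.map _) ((N.map _) x.2))
      = ((M.map _) x.1, (N.map _) x.2)
    have hM : (M.map h2) ((M.map h1) x.1) = (M.map (h1.trans h2)) x.1 := by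
      rw [← M.map_comp h1 h2]; rfl
    have hN : (N.map h2) ((N.map h1) x.2) = (N.map (h1.trans h2)) x.2 := by
      rw [← N.map_comp h1 h2]; rfl
    rw [hM, hN]

/-- Zigzag-connectedness of a subset of `ℝⁿ`. -/
def ZigzagConnected {n : ℕ} (I : Set (Pt n)) : Prop :=
  ∀ u ∈ I, ∀ v ∈ I,
    Relation.ReflTransGen (fun x y => x ∈ I ∧ y ∈ I ∧ (x ≤ y ∨ y ≤ x)) u v

/-- `I` is an interval in `ℝⁿ`: nonempty, order-convex and zigzag-connected. -/
def IsInterval {n : ℕ} (I : Set (Pt n)) : Prop :=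
  I.Nonempty ∧ I.OrdConnected ∧ ZigzagConnected I

/-- A partial multibijection `Fin m ⇸ Fin k'`, encoded by an `Option`-valued map that is
injective on matched indices. -/
def PartialInj {m k' : ℕ} (σ : Fin m → Option (Fin k')) : Prop :=
  ∀ i j l, σ i = some l → σ j = some l → i = j

/-- `σ` is an `ε`-matching between the barcodes `A` and `B` (families of intervals). -/
def IsEpsMatching (k : Type) [Field k] {n m k' : ℕ}
    (A : Fin m → Set (Pt n)) (hA : ∀ i, (A i).OrdConnected)
    (B : Fin k' → Set (Pt n)) (hB : ∀ j, (B j).OrdConnected)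
    (σ : Fin m → Option (Fin k')) (ε : ℝ) : Prop :=
  PartialInj σ ∧
  (∀ i, σ i = none → EpsTrivial (IntervalMod k (A i) (hA i)) (2 * ε)) ∧
  (∀ j, (∀ i, σ i ≠ some j) → EpsTrivial (IntervalMod k (B j) (hB j)) (2 * ε)) ∧
  (∀ i j, σ i = some j →
    Interleaved (IntervalMod k (A i) (hA i)) (IntervalMod k (B j) (hB j)) ε)

/-- The bottleneck distance between the interval decomposable modules with barcodes
`A` and `B`. -/
def bottleneckDist (k : Type) [Field k] {n m k' : ℕ}
    (A : Fin m → Set (Pt n)) (hA : ∀ i, (A i).OrdConnected)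
    (B : Fin k' → Set (Pt n)) (hB : ∀ j, (B j).OrdConnected) : EReal :=
  sInf {x : EReal | ∃ (ε : ℝ) (σ : Fin m → Option (Fin k')),
    0 ≤ ε ∧ IsEpsMatching k A hA B hB σ ε ∧ x = (ε : EReal)}


/-! Shifting by `ε` turns `N(ε)` into the rectangle module on `∏ (cᵢ - ε, dᵢ - ε)`, so it suffices
to describe the morphisms `k_I → k_J` between rectangle modules. By naturality through a zero
space, such a morphism that is nonzero at `u` forces every `v ≤ u` in `I` to lie in `J` and every
`w ≥ u` in `J` to lie in `I`; moving a single coordinate of `u` turns this into `c ≤ a` and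
`d ≤ b`, and `u ∈ I ∩ J` gives `a < d`. Conversely, under these inequalities the identity on
`I ∩ J`, extended by zero, is natural. -/

theorem lt_iInf_iff_of_finite {α ι : Type*} [CompleteLinearOrder α] [Nonempty ι] [Finite ι]
    {f : ι → α} {a : α} : a < ⨅ i, f i ↔ ∀ i, a < f i := by
  refine ⟨fun h i => h.trans_le (iInf_le f i), fun h => ?_⟩
  obtain ⟨i, hi⟩ := exists_eq_ciInf_of_finite (f := f)
  exact hi ▸ h i

theorem esub_le_coe_iff {x y : EReal} {ε : ℝ} (hε : 0 ≤ ε) :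
    esub x y ≤ ε ↔ x - ε ≤ y := by
  induction x using EReal.rec <;> induction y using EReal.rec <;>
    simp [esub, hε, EReal.bot_sub, EReal.sub_bot, ← EReal.coe_sub, add_comm]

theorem coe_lt_esub_iff {x y : EReal} {ε : ℝ} (hε : 0 ≤ ε) :
    (ε : EReal) < esub x y ↔ y < x - ε := by
  simpa only [not_le] using (esub_le_coe_iff hε).not

namespace IntervalMod

theorem shift_eq (I : Set (Pt n)) (hI : I.OrdConnected) (ε : ℝ) :
    (IntervalMod k I hI).shift ε = IntervalMod k ((shiftPt · ε) ⁻¹' I)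
      ⟨fun _ hu _ hw _ hv => hI.out hu hw ⟨shiftPt_mono ε hv.1, shiftPt_mono ε hv.2⟩⟩ :=
  rfl

theorem congr_set {I J : Set (Pt n)} (h : I = J) (hI : I.OrdConnected) :
    IntervalMod k I hI = IntervalMod k J (h ▸ hI) := by
  subst h; rfl

variable {I J : Set (Pt n)} {hI : I.OrdConnected} {hJ : J.OrdConnected}

theorem subsingleton_obj {u : Pt n} (hu : u ∉ I) : Subsingleton ((IntervalMod k I hI).obj u) :=
  ⟨fun x y => Subtype.ext ((x.2 hu).trans (y.2 hu).symm)⟩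

section Hom

variable (f : PersHom (IntervalMod k I hI) (IntervalMod k J hJ)) {u : Pt n}

theorem app_eq_zero_of_notMem_left (hu : u ∉ I) : f.app u = 0 :=
  have := subsingleton_obj (k := k) (hI := hI) hu
  Subsingleton.elim _ _

theorem app_eq_zero_of_notMem_right (hu : u ∉ J) : f.app u = 0 :=
  have := subsingleton_obj (k := k) (hI := hJ) hu
  Subsingleton.elim _ _

theorem mem_left_of_app_ne_zero (hu : f.app u ≠ 0) : u ∈ I :=
  not_not.1 (mt (app_eq_zero_of_notMem_left f) hu)

theorem mem_right_of_app_ne_zero (hu : f.app u ≠ 0) : u ∈ J :=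
  not_not.1 (mt (app_eq_zero_of_notMem_right f) hu)

theorem mem_right_of_le_of_app_ne_zero (hu : f.app u ≠ 0) {v : Pt n} (hvu : v ≤ u)
    (hv : v ∈ I) : v ∈ J := by
  by_contra hvJ
  obtain ⟨x, hx⟩ := DFunLike.ne_iff.1 hu
  let y : (IntervalMod k I hI).obj v := ⟨x.1, fun h => absurd hv h⟩
  have hy : (IntervalMod k I hI).map hvu y = x :=
    Subtype.ext (if_pos (mem_left_of_app_ne_zero f hu))
  have hnat := LinearMap.congr_fun (f.natural hvu) y
  simp only [LinearMap.comp_apply, hy, app_eq_zero_of_notMem_right f hvJ, LinearMap.zero_apply,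
    map_zero] at hnat
  exact hx hnat

theorem mem_left_of_le_of_app_ne_zero (hu : f.app u ≠ 0) {w : Pt n} (huw : u ≤ w)
    (hw : w ∈ J) : w ∈ I := by
  by_contra hwI
  obtain ⟨x, hx⟩ := DFunLike.ne_iff.1 hu
  have hnat := LinearMap.congr_fun (f.natural huw) x
  simp only [LinearMap.comp_apply, app_eq_zero_of_notMem_left f hwI, LinearMap.zero_apply] at hnat
  have hval : ((IntervalMod k J hJ).map huw (f.app u x)).1 = (f.app u x).1 := if_pos hw
  exact hx (Subtype.ext (hval.symm.trans (congrArg Subtype.val hnat.symm)))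

end Hom

def canonicalHom (H : ∀ ⦃u v : Pt n⦄, u ≤ v → u ∈ I → v ∈ J → u ∈ J ∧ v ∈ I) :
    PersHom (IntervalMod k I hI) (IntervalMod k J hJ) where
  app u :=
    { toFun := fun x => ⟨if u ∈ J then x.1 else 0, fun hu => if_neg hu⟩
      map_add' := fun x y => Subtype.ext <|
        show (if u ∈ J then x.1 + y.1 else 0) =
          (if u ∈ J then x.1 else 0) + (if u ∈ J then y.1 else 0) by split_ifs <;> simp
      map_smul' := fun c x => Subtype.ext <|
        show (if u ∈ J then c * x.1 else 0) = c * (if u ∈ J then x.1 else 0) by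
          split_ifs <;> simp }
  natural {u v} h := by
    refine LinearMap.ext fun x => Subtype.ext ?_
    show (if v ∈ J then (if v ∈ I then x.1 else 0) else 0) =
      (if v ∈ J then (if u ∈ J then x.1 else 0) else 0)
    by_cases hvJ : v ∈ J
    · by_cases huI : u ∈ I
      · obtain ⟨huJ, hvI⟩ := H h huI hvJ
        simp [hvJ, huJ, hvI]
      · simp [x.2 huI]
    · simp [hvJ]

theorem canonicalHom_app_ne_zero (H : ∀ ⦃u v : Pt n⦄, u ≤ v → u ∈ I → v ∈ J → u ∈ J ∧ v ∈ I)
    {u : Pt n} (huI : u ∈ I) (huJ : u ∈ J) :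
    (canonicalHom (k := k) (hI := hI) (hJ := hJ) H).app u ≠ 0 := by
  intro h
  have h1 := congrArg Subtype.val (LinearMap.congr_fun h ⟨1, fun hu => absurd huI hu⟩)
  change (if u ∈ J then (1 : k) else 0) = 0 at h1
  exact one_ne_zero ((if_pos huJ).symm.trans h1)

end IntervalMod

section Box

variable {a b c d : Fin n → EReal}

theorem preimage_shiftPt_box (ε : ℝ) :
    (shiftPt · ε) ⁻¹' box c d = box (fun i => c i - ε) (fun i => d i - ε) := by
  ext u
  simp only [Set.mem_preimage, box, Set.mem_ofPred_eq, shiftPt, EReal.coe_add]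
  refine forall_congr' fun i => and_congr ?_ ?_
  · exact (EReal.sub_lt_iff (.inl (EReal.coe_ne_bot ε)) (.inl (EReal.coe_ne_top ε))).symm
  · exact (EReal.lt_sub_iff_add_lt (.inl (EReal.coe_ne_bot ε)) (.inl (EReal.coe_ne_top ε))).symm

theorem RectMod.shift_eq (ε : ℝ) :
    (RectMod k c d).shift ε = RectMod k (fun i => c i - ε) (fun i => d i - ε) :=
  (IntervalMod.shift_eq _ _ ε).trans (IntervalMod.congr_set (preimage_shiftPt_box ε) _)

theorem update_mem_box {u : Pt n} (hu : u ∈ box a b) {i : Fin n} {s : ℝ}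
    (hs : a i < s ∧ (s : EReal) < b i) : Function.update u i s ∈ box a b := by
  intro j
  rcases eq_or_ne j i with rfl | hj
  · simpa using hs
  · simpa [hj] using hu j

theorem le_of_forall_le_mem_box {u : Pt n} (hu : u ∈ box a b)
    (h : ∀ v ≤ u, v ∈ box a b → v ∈ box c d) (i : Fin n) : c i ≤ a i := by
  by_contra! hac
  obtain ⟨s, has, hs⟩ := EReal.exists_between_coe_real (lt_min hac (hu i).1)
  have hsu : s ≤ u i := by exact_mod_cast (hs.trans_le (min_le_right _ _)).le
  have hv := h (Function.update u i s) (update_le_self_iff.2 hsu)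
    (update_mem_box hu ⟨has, (hs.trans_le (min_le_right _ _)).trans (hu i).2⟩)
  have := (hv i).1
  simp only [Function.update_self] at this
  exact (hs.trans_le (min_le_left _ _)).not_gt this

theorem le_of_forall_ge_mem_box {u : Pt n} (hu : u ∈ box c d)
    (h : ∀ w, u ≤ w → w ∈ box c d → w ∈ box a b) (i : Fin n) : d i ≤ b i := by
  by_contra! hbd
  obtain ⟨s, hs, hsd⟩ := EReal.exists_between_coe_real (max_lt hbd (hu i).2)
  have hus : u i ≤ s := by exact_mod_cast ((le_max_right _ _).trans_lt hs).le
  have hw := h (Function.update u i s) (le_update_self_iff.2 hus)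
    (update_mem_box hu ⟨(hu i).1.trans ((le_max_right _ _).trans_lt hs), hsd⟩)
  have := (hw i).2
  simp only [Function.update_self] at this
  exact ((le_max_left _ _).trans_lt hs).not_gt this

theorem RectMod.exists_nontrivial_hom_iff :
    (∃ f : PersHom (RectMod k a b) (RectMod k c d), ¬ f.Trivial) ↔
      (∀ i, c i ≤ a i) ∧ (∀ i, d i ≤ b i) ∧ ∀ i, a i < d i := by
  constructor
  · rintro ⟨f, hf⟩
    obtain ⟨u, hu⟩ : ∃ u, f.app u ≠ 0 := by simpa [PersHom.Trivial] using hf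
    have huI := IntervalMod.mem_left_of_app_ne_zero f hu
    have huJ := IntervalMod.mem_right_of_app_ne_zero f hu
    exact ⟨le_of_forall_le_mem_box huI fun v hvu hv =>
        IntervalMod.mem_right_of_le_of_app_ne_zero f hu hvu hv,
      le_of_forall_ge_mem_box huJ fun w huw hw =>
        IntervalMod.mem_left_of_le_of_app_ne_zero f hu huw hw,
      fun i => (huI i).1.trans (huJ i).2⟩
  · rintro ⟨hca, hdb, had⟩
    have H : ∀ ⦃u v : Pt n⦄, u ≤ v → u ∈ box a b → v ∈ box c d →
        u ∈ box c d ∧ v ∈ box a b := fun u v huv hu hv =>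
      ⟨fun i => ⟨(hca i).trans_lt (hu i).1, (EReal.coe_le_coe_iff.2 (huv i)).trans_lt (hv i).2⟩,
        fun i => ⟨(hu i).1.trans_le (EReal.coe_le_coe_iff.2 (huv i)), (hv i).2.trans_le (hdb i)⟩⟩
    choose s hs using fun i => EReal.exists_between_coe_real (had i)
    have hsI : s ∈ box a b := fun i => ⟨(hs i).1, (hs i).2.trans_le (hdb i)⟩
    have hsJ : s ∈ box c d := fun i => ⟨(hca i).trans_lt (hs i).1, (hs i).2⟩
    exact ⟨IntervalMod.canonicalHom H,
      fun h => IntervalMod.canonicalHom_app_ne_zero H hsI hsJ (h s)⟩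

end Box

theorem exists_nontrivial_morphism_to_shift_iff_general (a b c d : Fin 2 → EReal)
    (ε : ℝ) (hε : 0 ≤ ε) :
    (∃ f : PersHom (RectMod k a b) ((RectMod k c d).shift ε), ¬ f.Trivial) ↔
      (max (⨆ i, esub (c i) (a i)) (⨆ i, esub (d i) (b i)) ≤ (ε : EReal) ∧
        (ε : EReal) < ⨅ i, esub (d i) (a i)) := by
  rw [RectMod.shift_eq, RectMod.exists_nontrivial_hom_iff, max_le_iff, iSup_le_iff, iSup_le_iff,
    lt_iInf_iff_of_finite]
  simp only [esub_le_coe_iff hε, coe_lt_esub_iff hε, and_assoc]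

theorem exists_nontrivial_morphism_to_shift_iff (a b c d : Fin 2 → EReal)
    (ha : ∀ i, a i ≠ ⊤) (hb : ∀ i, b i ≠ ⊥)
    (hc : ∀ i, c i ≠ ⊤) (hd : ∀ i, d i ≠ ⊥) (hab : ∀ i, a i < b i) (hcd : ∀ i, c i < d i)
    (ε : ℝ) (hε : 0 ≤ ε) :
    (∃ f : PersHom (RectMod k a b) ((RectMod k c d).shift ε), ¬ f.Trivial) ↔
      (max (⨆ i, esub (c i) (a i)) (⨆ i, esub (d i) (b i)) ≤ (ε : EReal) ∧
        (ε : EReal) < ⨅ i, esub (d i) (a i)) :=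
  exists_nontrivial_morphism_to_shift_iff_general a b c d ε hε
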